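/- arXiv:1905.06557 — 4 statements merged into one kernel-verified Lean document; each statement's English description precedes it below -/
import Mathlib

section
/- For any graph G, twice the fractional matching number of G is an integer. -/
open SimpleGraph Finset

/-- The signless Laplacian matrix `Q(G) = D(G) + A(G)` of a graph. -/
noncomputable def signlessLap {V : Type*} [Fintype V] [DecidableEq V]
    (G : SimpleGraph V) [DecidableRel G.Adj] : Matrix V V ℝ :=
  Matrix.diagonal (fun v => (G.degree v : ℝ)) + G.adjMatrix ℝ

/-- The signless Laplacian spectral radius: the largest eigenvalue of `Q(G)`. -/
noncomputable def q1 {V : Type*} [Fintype V] [DecidableEq V]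
    (G : SimpleGraph V) [DecidableRel G.Adj] : ℝ :=
  sSup (spectrum ℝ (signlessLap G))

/-- `f` is a fractional matching of `G`: it assigns each edge a weight in `[0,1]`
(and `0` to non-edges), with total weight at most `1` at each vertex. -/
def IsFracMatching {V : Type*} [Fintype V] [DecidableEq V]
    (G : SimpleGraph V) [DecidableRel G.Adj] (f : Sym2 V → ℝ) : Prop :=
  (∀ e ∈ G.edgeFinset, 0 ≤ f e ∧ f e ≤ 1) ∧
  (∀ e, e ∉ G.edgeFinset → f e = 0) ∧
  (∀ v : V, ∑ e ∈ G.incidenceFinset v, f e ≤ 1)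

/-- The fractional matching number of `G`. -/
noncomputable def fracMatchNum {V : Type*} [Fintype V] [DecidableEq V]
    (G : SimpleGraph V) [DecidableRel G.Adj] : ℝ :=
  sSup {x : ℝ | ∃ f, IsFracMatching G f ∧ x = ∑ e ∈ G.edgeFinset, f e}

/-- `G` has a fractional perfect matching: a fractional matching of total weight `n/2`. -/
def HasFracPerfectMatching {V : Type*} [Fintype V] [DecidableEq V]
    (G : SimpleGraph V) [DecidableRel G.Adj] : Prop :=
  ∃ f, IsFracMatching G f ∧ ∑ e ∈ G.edgeFinset, f e = (Fintype.card V : ℝ) / 2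

/-!
Let `d = max_S (|S| - |N(S)|)`, the Hall deficiency of the bipartite double cover of `G`.
Then `2 α*'(G) = n - d`. For the upper bound, summing the vertex constraints gives
`2 ∑ f ≤ (n - |S|) + load(S)`, and every edge at `S` has an end in `N(S)`, so
`load(S) ≤ load(N(S)) ≤ |N(S)|`. For the lower bound, Hall's theorem with deficiency `d` gives a
matching of size `n - d` in the double cover; putting weight `1/2` on the edge `ab` of `G` for
each matched pair `(a, b)` is a fractional matching of `G` of weight `(n - d)/2`.
-/

namespace Finset

theorem exists_matching_of_card_le_card_biUnion_add {ι α : Type*} [Fintype ι] [DecidableEq α]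
    (t : ι → Finset α) (d : ℕ) (h : ∀ s : Finset ι, #s ≤ #(s.biUnion t) + d) :
    ∃ M : Finset (ι × α), (∀ p ∈ M, p.2 ∈ t p.1) ∧
      Set.InjOn Prod.fst (M : Set (ι × α)) ∧ Set.InjOn Prod.snd (M : Set (ι × α)) ∧
      Fintype.card ι ≤ #M + d := by
  classical
  -- `d` dummy vertices adjacent to everything turn the deficiency condition into Hall's condition
  let t' : ι → Finset (α ⊕ Fin d) := fun i => (t i).map .inl ∪ univ.map .inr
  have hall : ∀ s : Finset ι, #s ≤ #(s.biUnion t') := by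
    intro s
    rcases s.eq_empty_or_nonempty with rfl | ⟨i, hi⟩
    · simp
    have hsub : (s.biUnion t).map .inl ∪ univ.map .inr ⊆ s.biUnion t' := by
      intro x hx
      simp only [mem_union, mem_map, mem_biUnion, t'] at hx ⊢
      rcases hx with ⟨a, ⟨j, hj, ha⟩, rfl⟩ | ⟨k, -, rfl⟩
      · exact ⟨j, hj, Or.inl ⟨a, ha, rfl⟩⟩
      · exact ⟨i, hi, Or.inr ⟨k, mem_univ _, rfl⟩⟩
    calc #s ≤ #(s.biUnion t) + d := h s
      _ = #((s.biUnion t).map .inl ∪ univ.map .inr) := by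
        rw [card_union_of_disjoint (disjoint_map_inl_map_inr _ _)]; simp
      _ ≤ #(s.biUnion t') := card_le_card hsub
  obtain ⟨ψ, hψ, hψt⟩ := (all_card_le_biUnion_card_iff_exists_injective t').1 hall
  set M := (univ ×ˢ univ.biUnion t).filter fun p => ψ p.1 = .inl p.2
  have hmem : ∀ {p : ι × α}, p ∈ M ↔ ψ p.1 = .inl p.2 := by
    intro ⟨i, a⟩
    suffices ψ i = .inl a → a ∈ t i by simpa [M] using fun h => ⟨i, this h⟩
    intro hia
    simpa [t', hia] using hψt i
  refine ⟨M, fun p hp => ?_, fun p hp q hq hpq => ?_, fun p hp q hq hpq => ?_, ?_⟩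
  · simpa [t', hmem.1 hp] using hψt p.1
  · have := (hmem.1 hp).symm.trans (hpq ▸ hmem.1 hq)
    exact Prod.ext hpq (Sum.inl_injective this)
  · exact Prod.ext (hψ ((hmem.1 hp).trans (hpq ▸ (hmem.1 hq).symm))) hpq
  · have hsub : univ.image ψ ⊆ (M.image Prod.snd).map .inl ∪ univ.map .inr := by
      intro x hx
      obtain ⟨i, -, rfl⟩ := mem_image.1 hx
      rcases hi : ψ i with a | k
      · exact mem_union_left _ (mem_map_of_mem _ (mem_image.2 ⟨(i, a), hmem.2 hi, rfl⟩))
      · exact mem_union_right _ (mem_map_of_mem _ (mem_univ k))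
    calc Fintype.card ι = #(univ.image ψ) := (card_image_of_injective _ hψ).symm
      _ ≤ #(M.image Prod.snd) + d := by
        simpa using (card_le_card hsub).trans (card_union_le _ _)
      _ ≤ #M + d := Nat.add_le_add_right card_image_le d

end Finset

namespace SimpleGraph

variable {V : Type*} [Fintype V] [DecidableEq V] (G : SimpleGraph V) [DecidableRel G.Adj]

theorem incidenceFinset_eq_image_neighborFinset (v : V) :
    G.incidenceFinset v = (G.neighborFinset v).image (s(v, ·)) := by
  ext e
  induction e using Sym2.ind with
  | h a b =>
    simp only [mem_incidenceFinset, mem_image, mem_neighborFinset]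
    constructor
    · rintro ⟨hab, hv⟩
      obtain rfl | rfl := Sym2.mem_iff.1 hv
      · exact ⟨b, hab, rfl⟩
      · exact ⟨a, hab.symm, Sym2.eq_swap⟩
    · rintro ⟨u, hu, he⟩
      rw [← he]
      exact ⟨hu, Sym2.mem_mk_left _ _⟩

theorem sum_incidenceFinset_eq_sum_neighborFinset {M : Type*} [AddCommMonoid M]
    (f : Sym2 V → M) (v : V) :
    ∑ e ∈ G.incidenceFinset v, f e = ∑ u ∈ G.neighborFinset v, f s(v, u) := by
  rw [incidenceFinset_eq_image_neighborFinset, sum_image]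
  intro u _ w _ h
  exact Sym2.congr_right.1 h

theorem sum_sum_incidenceFinset {M : Type*} [AddCommMonoid M] (f : Sym2 V → M) :
    ∑ v, ∑ e ∈ G.incidenceFinset v, f e = 2 • ∑ e ∈ G.edgeFinset, f e := by
  rw [sum_comm' (t' := G.edgeFinset) (s' := Sym2.toFinset), smul_sum]
  · refine sum_congr rfl fun e he => ?_
    rw [sum_const, Sym2.card_toFinset_of_not_isDiag]
    exact G.not_isDiag_of_mem_edgeSet (mem_edgeFinset.1 he)
  · intro v e
    simp [mem_incidenceFinset, incidenceSet, Sym2.mem_toFinset, and_comm]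

def hallDeficiency : ℕ :=
  (univ : Finset (Finset V)).sup fun S => #S - #(S.biUnion (G.neighborFinset ·))

theorem card_le_card_biUnion_neighborFinset_add_hallDeficiency (S : Finset V) :
    #S ≤ #(S.biUnion (G.neighborFinset ·)) + G.hallDeficiency := by
  have := le_sup (f := fun S => #S - #(S.biUnion (G.neighborFinset ·))) (mem_univ S)
  unfold hallDeficiency
  omega

theorem exists_card_eq_card_biUnion_neighborFinset_add_hallDeficiency :
    ∃ S : Finset V, #S = #(S.biUnion (G.neighborFinset ·)) + G.hallDeficiency := by
  obtain ⟨S, -, hS⟩ := exists_mem_eq_sup (univ : Finset (Finset V)) univ_nonempty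
    fun S => #S - #(S.biUnion (G.neighborFinset ·))
  rcases Nat.eq_zero_or_pos G.hallDeficiency with h0 | hpos
  · exact ⟨∅, by simp [h0]⟩
  · refine ⟨S, ?_⟩
    unfold hallDeficiency at hpos ⊢
    omega

theorem hallDeficiency_le_card : G.hallDeficiency ≤ Fintype.card V :=
  Finset.sup_le fun S _ => (Nat.sub_le _ _).trans (card_le_univ S)

end SimpleGraph

namespace IsFracMatching

variable {V : Type*} [Fintype V] [DecidableEq V] {G : SimpleGraph V} [DecidableRel G.Adj]
  {f : Sym2 V → ℝ}

theorem nonneg (hf : IsFracMatching G f) (e : Sym2 V) : 0 ≤ f e := by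
  by_cases he : e ∈ G.edgeFinset
  · exact (hf.1 e he).1
  · exact (hf.2.1 e he).ge

theorem of_nonneg (h0 : ∀ e, 0 ≤ f e) (hE : ∀ e ∉ G.edgeFinset, f e = 0)
    (hv : ∀ v, ∑ e ∈ G.incidenceFinset v, f e ≤ 1) : IsFracMatching G f := by
  refine ⟨fun e he => ⟨h0 e, ?_⟩, hE, hv⟩
  induction e using Sym2.ind with
  | h a b =>
    have : s(a, b) ∈ G.incidenceFinset a := by
      simpa [mem_incidenceFinset] using mem_edgeFinset.1 he
    exact (single_le_sum (fun e _ => h0 e) this).trans (hv a)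

theorem sum_neighborFinset_le_one (hf : IsFracMatching G f) (v : V) :
    ∑ u ∈ G.neighborFinset v, f s(v, u) ≤ 1 :=
  G.sum_incidenceFinset_eq_sum_neighborFinset f v ▸ hf.2.2 v

theorem two_mul_sum_add_card_le (hf : IsFracMatching G f) (S : Finset V) :
    2 * ∑ e ∈ G.edgeFinset, f e + #S ≤
      Fintype.card V + #(S.biUnion (G.neighborFinset ·)) := by
  set N := S.biUnion (G.neighborFinset ·)
  have hS : ∑ v ∈ S, ∑ e ∈ G.incidenceFinset v, f e ≤ #N := by
    simp_rw [G.sum_incidenceFinset_eq_sum_neighborFinset]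
    calc ∑ v ∈ S, ∑ u ∈ G.neighborFinset v, f s(v, u)
        = ∑ u ∈ N, ∑ v ∈ S with G.Adj u v, f s(v, u) := by
          refine sum_comm' fun v u => ?_
          simp only [N, mem_biUnion, mem_neighborFinset, mem_filter]
          exact ⟨fun ⟨hv, hu⟩ => ⟨⟨hv, hu.symm⟩, v, hv, hu⟩,
            fun ⟨⟨hv, hu⟩, _⟩ => ⟨hv, hu.symm⟩⟩
      _ ≤ ∑ u ∈ N, ∑ v ∈ G.neighborFinset u, f s(u, v) := by
          refine sum_le_sum fun u _ => ?_
          rw [sum_congr rfl fun v _ => congrArg f Sym2.eq_swap]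
          refine sum_le_sum_of_subset_of_nonneg (fun v hv => ?_) fun v _ _ => hf.nonneg _
          simpa using (mem_filter.1 hv).2
      _ ≤ ∑ _u ∈ N, 1 := sum_le_sum fun u _ => hf.sum_neighborFinset_le_one u
      _ = #N := by simp
  have hSc : ∑ v ∈ Sᶜ, ∑ e ∈ G.incidenceFinset v, f e ≤ #Sᶜ := by
    simpa using sum_le_sum fun v (_ : v ∈ Sᶜ) => hf.2.2 v
  have hcard : (#Sᶜ : ℝ) + #S = Fintype.card V := by
    exact_mod_cast card_compl_add_card S
  have := G.sum_sum_incidenceFinset f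
  rw [← sum_add_sum_compl S, nsmul_eq_mul, Nat.cast_ofNat] at this
  linarith

theorem two_mul_sum_add_hallDeficiency_le (hf : IsFracMatching G f) :
    2 * ∑ e ∈ G.edgeFinset, f e + G.hallDeficiency ≤ Fintype.card V := by
  obtain ⟨S, hS⟩ := G.exists_card_eq_card_biUnion_neighborFinset_add_hallDeficiency
  have := hf.two_mul_sum_add_card_le S
  rw [hS, Nat.cast_add] at this
  linarith

end IsFracMatching

section

variable {V : Type*} [Fintype V] [DecidableEq V] {G : SimpleGraph V} [DecidableRel G.Adj]

theorem exists_isFracMatching_two_mul_sum_eq_card (M : Finset (V × V))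
    (hadj : ∀ p ∈ M, G.Adj p.1 p.2) (hfst : Set.InjOn Prod.fst (M : Set (V × V)))
    (hsnd : Set.InjOn Prod.snd (M : Set (V × V))) :
    ∃ f, IsFracMatching G f ∧ 2 * ∑ e ∈ G.edgeFinset, f e = #M := by
  have hedge : ∀ p : V × V, p ∈ M → s(p.1, p.2) ∈ G.edgeFinset :=
    fun p hp => mem_edgeFinset.2 (hadj p hp)
  have hfiber (g : V × V → V) (hg : Set.InjOn g (M : Set (V × V))) (v : V) :
      #{p ∈ M | g p = v} ≤ 1 :=
    card_le_one.2 fun p hp q hq => by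
      rw [mem_filter] at hp hq
      exact hg hp.1 hq.1 (hp.2.trans hq.2.symm)
  have hload (v : V) : #{p ∈ M | s(p.1, p.2) ∈ G.incidenceFinset v} ≤ 2 := by
    have hsub : {p ∈ M | s(p.1, p.2) ∈ G.incidenceFinset v} ⊆
        {p ∈ M | p.1 = v} ∪ {p ∈ M | p.2 = v} := by
      intro p hp
      obtain ⟨hpM, hpv⟩ := mem_filter.1 hp
      rcases Sym2.mem_iff.1 ((mem_incidenceFinset _ _ _).1 hpv).2 with h | h
      · exact mem_union_left _ (mem_filter.2 ⟨hpM, h.symm⟩)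
      · exact mem_union_right _ (mem_filter.2 ⟨hpM, h.symm⟩)
    have := hfiber _ hfst v
    have := hfiber _ hsnd v
    have := card_union_le {p ∈ M | p.1 = v} {p ∈ M | p.2 = v}
    have := card_le_card hsub
    omega
  refine ⟨fun e => #{p ∈ M | s(p.1, p.2) = e} / 2,
    .of_nonneg (fun e => by positivity) (fun e he => ?_) (fun v => ?_), ?_⟩
  · rw [filter_eq_empty_iff.2 fun p hp (hpe : s(p.1, p.2) = e) => he (hpe ▸ hedge p hp)]
    simp
  · rw [← sum_div, ← Nat.cast_sum, sum_card_fiberwise_eq_card_filter, div_le_one two_pos]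
    exact_mod_cast hload v
  · rw [← sum_div, ← Nat.cast_sum, sum_card_fiberwise_eq_card_filter, filter_true_of_mem hedge]
    ring

end

theorem two_mul_fracMatchNum_eq {V : Type*} [Fintype V] [DecidableEq V]
    (G : SimpleGraph V) [DecidableRel G.Adj] :
    2 * fracMatchNum G = (Fintype.card V - G.hallDeficiency : ℕ) := by
  obtain ⟨M, hadj, hfst, hsnd, hM⟩ := exists_matching_of_card_le_card_biUnion_add
    (G.neighborFinset ·) _ G.card_le_card_biUnion_neighborFinset_add_hallDeficiency
  obtain ⟨f, hf, hfM⟩ :=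
    exists_isFracMatching_two_mul_sum_eq_card M (fun p hp => by simpa using hadj p hp) hfst hsnd
  have hfmax : 2 * ∑ e ∈ G.edgeFinset, f e + G.hallDeficiency = Fintype.card V :=
    le_antisymm hf.two_mul_sum_add_hallDeficiency_le (by rw [hfM]; exact_mod_cast hM)
  have hsup : fracMatchNum G = ∑ e ∈ G.edgeFinset, f e := by
    refine IsGreatest.csSup_eq ⟨⟨f, hf, rfl⟩, ?_⟩
    rintro _ ⟨g, hg, rfl⟩
    linarith [hg.two_mul_sum_add_hallDeficiency_le]
  rw [hsup, Nat.cast_sub G.hallDeficiency_le_card]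
  linarith

/-- For any graph `G`, twice the fractional matching number is an integer. -/
theorem twice_fracMatchNum_integer {V : Type*} [Fintype V] [DecidableEq V]
    (G : SimpleGraph V) [DecidableRel G.Adj] :
    ∃ m : ℕ, 2 * fracMatchNum G = (m : ℝ) :=
  ⟨_, two_mul_fracMatchNum_eq G⟩
end

section
/- Let H be a connected bipartite graph with bipartition V(H) = V1 ∪ V2 such that every vertex of V1 has degree δ, |V1| = |V2| + k, and all vertices of V2 have equal degree. Then the fractional matching number of H is (|V(H)| - k)/2. -/
open SimpleGraph Finset

/-- `G` belongs to the family `𝓗(δ, k)`: `G` is bipartite with parts `V1, V2`,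
every vertex of `V1` has degree `δ`, `|V1| = |V2| + k`, and all vertices of `V2`
have the same degree. -/
def InFamilyH {V : Type*} [Fintype V] [DecidableEq V]
    (G : SimpleGraph V) [DecidableRel G.Adj] (δ k : ℕ) : Prop :=
  ∃ V1 V2 : Finset V, Disjoint V1 V2 ∧ V1 ∪ V2 = Finset.univ ∧
    (∀ u v, G.Adj u v → (u ∈ V1 ∧ v ∈ V2) ∨ (u ∈ V2 ∧ v ∈ V1)) ∧
    (∀ v ∈ V1, G.degree v = δ) ∧
    V1.card = V2.card + k ∧
    (∃ d, ∀ v ∈ V2, G.degree v = d)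

/-- Double counting: if every edge has exactly one endpoint in `S`, then a sum over
edges equals the sum over `S` of sums over incident edges. -/
lemma sum_edge_eq_sum_inc {V : Type*} [Fintype V] [DecidableEq V]
    (H : SimpleGraph V) [DecidableRel H.Adj] (S : Finset V)
    (hS : ∀ e ∈ H.edgeFinset, (S.filter (fun v => v ∈ e)).card = 1)
    (g : Sym2 V → ℝ) :
    ∑ e ∈ H.edgeFinset, g e = ∑ v ∈ S, ∑ e ∈ H.incidenceFinset v, g e := by
  have h1 : ∀ v : V, H.incidenceFinset v = H.edgeFinset.filter (fun e => v ∈ e) :=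
    fun v => H.incidenceFinset_eq_filter v
  simp_rw [h1, Finset.sum_filter]
  rw [Finset.sum_comm]
  refine Finset.sum_congr rfl fun e he => ?_
  rw [← Finset.sum_filter, Finset.sum_const, hS e he, one_smul]

lemma one_endpoint {V : Type*} [Fintype V] [DecidableEq V]
    (H : SimpleGraph V) [DecidableRel H.Adj] (S T : Finset V)
    (hdis : Disjoint S T)
    (hb : ∀ u v, H.Adj u v → (u ∈ S ∧ v ∈ T) ∨ (u ∈ T ∧ v ∈ S)) :
    ∀ e ∈ H.edgeFinset, (T.filter (fun v => v ∈ e)).card = 1 := by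
  intro e he
  induction e with
  | h a b =>
    rw [SimpleGraph.mem_edgeFinset, SimpleGraph.mem_edgeSet] at he
    rcases hb a b he with ⟨ha, hb'⟩ | ⟨ha, hb'⟩
    · have : T.filter (fun v => v ∈ s(a, b)) = {b} := by
        ext v
        simp only [Finset.mem_filter, Sym2.mem_iff, Finset.mem_singleton]
        constructor
        · rintro ⟨hv, rfl | rfl⟩
          · exact absurd hv (Finset.disjoint_left.mp hdis ha)
          · rfl
        · rintro rfl; exact ⟨hb', Or.inr rfl⟩
      rw [this, Finset.card_singleton]
    · have : T.filter (fun v => v ∈ s(a, b)) = {a} := by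
        ext v
        simp only [Finset.mem_filter, Sym2.mem_iff, Finset.mem_singleton]
        constructor
        · rintro ⟨hv, rfl | rfl⟩
          · rfl
          · exact absurd hv (Finset.disjoint_left.mp hdis hb')
        · rintro rfl; exact ⟨ha, Or.inl rfl⟩
      rw [this, Finset.card_singleton]

/-- If `H ∈ 𝓗(δ, k)` is connected, then `α*'(H) = (|V(H)| - k) / 2`. -/
theorem fracMatchNum_of_familyH {V : Type*} [Fintype V] [DecidableEq V]
    (H : SimpleGraph V) [DecidableRel H.Adj] (δ k : ℕ) (hδ : 0 < δ) (hk : 0 < k)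
    (hconn : H.Connected) (hH : InFamilyH H δ k) :
    fracMatchNum H = ((Fintype.card V : ℝ) - k) / 2 := by
  obtain ⟨V1, V2, hdisj, hunion, hbip, hdeg1, hcard, d, hdeg2⟩ := hH
  -- each edge has exactly one endpoint in V2 and one in V1
  have hone2 := one_endpoint H V1 V2 hdisj hbip
  have hone1 := one_endpoint H V2 V1 hdisj.symm (fun u v h => (hbip u v h).symm)
  -- vertex incidence sums of a constant
  have hincsum : ∀ (c : ℝ) (v : V), ∑ e ∈ H.incidenceFinset v, c = (H.degree v : ℝ) * c := by
    intro c v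
    rw [Finset.sum_const, SimpleGraph.card_incidenceFinset_eq_degree, nsmul_eq_mul]
  -- edge counts
  have hm1 : (H.edgeFinset.card : ℝ) = (δ : ℝ) * V1.card := by
    have := sum_edge_eq_sum_inc H V1 hone1 (fun _ => (1 : ℝ))
    simp_rw [hincsum (1 : ℝ)] at this
    rw [Finset.sum_const, nsmul_eq_mul, mul_one] at this
    rw [this]
    rw [Finset.sum_congr rfl (fun v hv => by rw [hdeg1 v hv]), Finset.sum_const,
      nsmul_eq_mul]
    ring
  have hm2 : (H.edgeFinset.card : ℝ) = (d : ℝ) * V2.card := by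
    have := sum_edge_eq_sum_inc H V2 hone2 (fun _ => (1 : ℝ))
    simp_rw [hincsum (1 : ℝ)] at this
    rw [Finset.sum_const, nsmul_eq_mul, mul_one] at this
    rw [this]
    rw [Finset.sum_congr rfl (fun v hv => by rw [hdeg2 v hv]), Finset.sum_const,
      nsmul_eq_mul]
    ring
  -- V1 nonempty, hence V2 nonempty
  have hV1pos : 0 < V1.card := by omega
  obtain ⟨v1, hv1⟩ := Finset.card_pos.mp hV1pos
  have hdv1 : 0 < H.degree v1 := by rw [hdeg1 v1 hv1]; exact hδ
  obtain ⟨u, hu⟩ := (SimpleGraph.degree_pos_iff_exists_adj H v1).mp hdv1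
  have huV2 : u ∈ V2 := by
    rcases hbip v1 u hu with ⟨_, h⟩ | ⟨h, _⟩
    · exact h
    · exact absurd h (Finset.disjoint_left.mp hdisj hv1)
  have hV2pos : (0 : ℝ) < V2.card := by
    exact_mod_cast Finset.card_pos.mpr ⟨u, huV2⟩
  have hV1posR : (0 : ℝ) < V1.card := by exact_mod_cast hV1pos
  have hδR : (0 : ℝ) < δ := by exact_mod_cast hδ
  have hdpos : (0 : ℝ) < d := by
    by_contra h
    push_neg at h
    have hd0 : (d : ℝ) = 0 := le_antisymm h (by positivity)
    rw [hd0, zero_mul] at hm2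
    rw [hm2] at hm1
    nlinarith
  have hdge1 : (1 : ℝ) ≤ d := by
    have : (1 : ℕ) ≤ d := by
      by_contra h
      push_neg at h
      interval_cases d
      simp at hdpos
    exact_mod_cast this
  -- δ ≤ d
  have hcardR : (V1.card : ℝ) = V2.card + k := by exact_mod_cast hcard
  have hkR : (0 : ℝ) < k := by exact_mod_cast hk
  have hδled : (δ : ℝ) ≤ d := by nlinarith [hm1, hm2]
  -- the optimal fractional matching
  set f : Sym2 V → ℝ := fun e => if e ∈ H.edgeFinset then 1 / d else 0 with hf
  have hfval : ∀ e ∈ H.edgeFinset, f e = 1 / d := fun e he => by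
    simp only [hf]; rw [if_pos he]
  have hfm : IsFracMatching H f := by
    refine ⟨fun e he => ?_, fun e he => by simp only [hf]; rw [if_neg he], fun v => ?_⟩
    · rw [hfval e he]
      constructor
      · positivity
      · rw [div_le_one hdpos]; exact hdge1
    · have hsub : H.incidenceFinset v ⊆ H.edgeFinset := by
        intro e he
        rw [SimpleGraph.mem_incidenceFinset] at he
        rw [SimpleGraph.mem_edgeFinset]
        exact he.1
      rw [Finset.sum_congr rfl (fun e he => hfval e (hsub he)), hincsum]
      have hdegle : (H.degree v : ℝ) ≤ d := by
        have hv : v ∈ V1 ∪ V2 := hunion ▸ Finset.mem_univ v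
        rcases Finset.mem_union.mp hv with hv | hv
        · rw [hdeg1 v hv]; exact hδled
        · rw [hdeg2 v hv]
      rw [mul_one_div, div_le_one hdpos]
      exact hdegle
  have hfsum : ∑ e ∈ H.edgeFinset, f e = (V2.card : ℝ) := by
    rw [Finset.sum_congr rfl hfval, Finset.sum_const, nsmul_eq_mul, hm2]
    field_simp
  -- upper bound
  have hub : ∀ x ∈ {x : ℝ | ∃ g, IsFracMatching H g ∧ x = ∑ e ∈ H.edgeFinset, g e},
      x ≤ (V2.card : ℝ) := by
    rintro x ⟨g, hg, rfl⟩
    rw [sum_edge_eq_sum_inc H V2 hone2 g]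
    calc ∑ v ∈ V2, ∑ e ∈ H.incidenceFinset v, g e ≤ ∑ v ∈ V2, (1 : ℝ) :=
          Finset.sum_le_sum (fun v _ => hg.2.2 v)
      _ = V2.card := by rw [Finset.sum_const, nsmul_eq_mul, mul_one]
  have hmem : (V2.card : ℝ) ∈ {x : ℝ | ∃ g, IsFracMatching H g ∧ x = ∑ e ∈ H.edgeFinset, g e} :=
    ⟨f, hfm, hfsum.symm⟩
  have hsup : fracMatchNum H = (V2.card : ℝ) := by
    unfold fracMatchNum
    exact le_antisymm (csSup_le ⟨_, hmem⟩ hub) (le_csSup ⟨(V2.card : ℝ), hub⟩ hmem)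
  rw [hsup]
  have hcardV : Fintype.card V = V1.card + V2.card := by
    rw [← Finset.card_univ, ← hunion, Finset.card_union_of_disjoint hdisj]
  have : (Fintype.card V : ℝ) = 2 * V2.card + k := by
    rw [hcardV]; push_cast [hcard]; ring
  rw [this]; ring
end

section
/- Let G be a connected graph on n vertices with minimum degree δ, and let G^c be its complement. If the signless Laplacian spectral radius of the complement satisfies q1(G^c) < 2δ, then G has a fractional perfect matching. -/
open SimpleGraph Finset

/-! If Hall's condition fails for the neighbourhoods of `G`, say `|N(A)| < |A|`, then
`J = A \ N(A)` is an independent set whose neighbourhood lies in `N(A) \ A`, so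
`|N(J)| < |J|` and hence `δ < |J|`. But `J` is a clique of `Gᶜ`, and the Rayleigh quotient of
its indicator vector gives `q₁(Gᶜ) ≥ 2(|J| - 1) ≥ 2δ`. So Hall's condition holds and yields a
permutation `σ` with `v ~ σ v` for every `v`; giving each edge `{v, σ v}` weight `1/2` per
vertex `v` that produces it is a fractional perfect matching. -/

open Matrix

theorem Matrix.IsHermitian.dotProduct_mulVec_le_sSup_spectrum {n : Type*} [Fintype n]
    [DecidableEq n] {A : Matrix n n ℝ} (hA : A.IsHermitian) (x : n → ℝ) :
    x ⬝ᵥ (A *ᵥ x) ≤ sSup (spectrum ℝ A) * (x ⬝ᵥ x) := by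
  set c := sSup (spectrum ℝ A)
  have hpsd : (algebraMap ℝ (Matrix n n ℝ) c - A).PosSemidef := by
    refine posSemidef_iff_isHermitian_and_spectrum_nonneg.2 ⟨?_, ?_⟩
    · exact (isHermitian_diagonal _).sub hA
    · rw [← spectrum.singleton_sub_eq]
      rintro _ ⟨_, rfl, μ, hμ, rfl⟩
      exact sub_nonneg.2 (le_csSup A.finite_real_spectrum.bddAbove hμ)
  have := hpsd.dotProduct_mulVec_nonneg x
  rw [star_trivial, sub_mulVec, dotProduct_sub, Algebra.algebraMap_eq_smul_one, smul_mulVec,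
    one_mulVec, dotProduct_smul, smul_eq_mul] at this
  linarith

section SignlessLaplacian

variable {V : Type*} [Fintype V] [DecidableEq V] (H : SimpleGraph V) [DecidableRel H.Adj]

theorem isHermitian_signlessLap : (signlessLap H).IsHermitian :=
  (H.isHermitian_degMatrix ℝ).add (H.isHermitian_adjMatrix ℝ)

theorem signlessLap_mulVec_apply (x : V → ℝ) (v : V) :
    (signlessLap H *ᵥ x) v = H.degree v * x v + ∑ w ∈ H.neighborFinset v, x w := by
  rw [signlessLap, add_mulVec, Pi.add_apply, mulVec_diagonal, adjMatrix_mulVec_apply]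

theorem two_mul_card_sub_one_le_q1 {J : Finset V} (hJ : H.IsClique (J : Set V))
    (hne : J.Nonempty) : 2 * ((#J : ℝ) - 1) ≤ q1 H := by
  set x : V → ℝ := fun v => if v ∈ J then 1 else 0
  have dotProduct_x (y : V → ℝ) : x ⬝ᵥ y = ∑ v ∈ J, y v := by
    simp [x, dotProduct, Finset.sum_ite_mem]
  have erase_subset (v : V) (hv : v ∈ J) : J.erase v ⊆ H.neighborFinset v := fun w hw =>
    (H.mem_neighborFinset v w).2 (hJ hv (mem_of_mem_erase hw) (ne_of_mem_erase hw).symm)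
  have hQx (v : V) (hv : v ∈ J) : 2 * ((#J : ℝ) - 1) ≤ (signlessLap H *ᵥ x) v := by
    have hcard : (#(J.erase v) : ℝ) = #J - 1 := by
      rw [card_erase_of_mem hv, Nat.cast_pred hne.card_pos]
    have hdeg : (#J : ℝ) - 1 ≤ H.degree v := by
      rw [← hcard, ← card_neighborFinset_eq_degree]
      exact_mod_cast card_le_card (erase_subset v hv)
    have hnbr : (#J : ℝ) - 1 ≤ ∑ w ∈ H.neighborFinset v, x w :=
      calc (#J : ℝ) - 1 = ∑ w ∈ J.erase v, x w := by
            rw [sum_congr rfl fun w hw => if_pos (mem_of_mem_erase hw), sum_const, nsmul_one,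
              hcard]
        _ ≤ ∑ w ∈ H.neighborFinset v, x w :=
            sum_le_sum_of_subset_of_nonneg (erase_subset v hv) fun w _ _ => by
              simp only [x]; positivity
    rw [signlessLap_mulVec_apply]
    simp only [x, if_pos hv, mul_one]
    linarith
  have hk : (0 : ℝ) < #J := by exact_mod_cast hne.card_pos
  refine le_of_mul_le_mul_right ?_ hk
  calc 2 * ((#J : ℝ) - 1) * #J = ∑ _v ∈ J, 2 * ((#J : ℝ) - 1) := by
        rw [sum_const, nsmul_eq_mul, mul_comm]
    _ ≤ x ⬝ᵥ (signlessLap H *ᵥ x) := by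
        rw [dotProduct_x]; exact sum_le_sum hQx
    _ ≤ q1 H * (x ⬝ᵥ x) := (isHermitian_signlessLap H).dotProduct_mulVec_le_sSup_spectrum x
    _ = q1 H * #J := by simp [dotProduct_x, x]

end SignlessLaplacian

section Matching

variable {V : Type*} [Fintype V] [DecidableEq V] (G : SimpleGraph V) [DecidableRel G.Adj]

theorem exists_isIndepSet_minDegree_lt_card {A : Finset V}
    (hA : #(A.biUnion (G.neighborFinset ·)) < #A) :
    ∃ J : Finset V, G.IsIndepSet (J : Set V) ∧ G.minDegree < #J := by
  set N := A.biUnion (G.neighborFinset ·)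
  have mem_N {a w : V} (ha : a ∈ A) (haw : G.Adj a w) : w ∈ N :=
    mem_biUnion.2 ⟨a, ha, (G.mem_neighborFinset a w).2 haw⟩
  refine ⟨A \ N, fun u hu w hw _ huw => (mem_sdiff.1 hw).2 (mem_N (mem_sdiff.1 hu).1 huw), ?_⟩
  have hsub : (A \ N).biUnion (G.neighborFinset ·) ⊆ N \ A := by
    intro w hw
    obtain ⟨u, hu, huw⟩ := mem_biUnion.1 hw
    rw [mem_neighborFinset] at huw
    exact mem_sdiff.2 ⟨mem_N (mem_sdiff.1 hu).1 huw,
      fun hwA => (mem_sdiff.1 hu).2 (mem_N hwA huw.symm)⟩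
  have hlt : #((A \ N).biUnion (G.neighborFinset ·)) < #(A \ N) := by
    have := card_le_card hsub
    have := card_sdiff_add_card_inter A N
    have := card_sdiff_add_card_inter N A
    rw [inter_comm] at this
    omega
  obtain ⟨v, hv⟩ : (A \ N).Nonempty := card_pos.1 (by omega)
  calc G.minDegree ≤ G.degree v := G.minDegree_le_degree v
    _ ≤ #((A \ N).biUnion (G.neighborFinset ·)) := by
        rw [← card_neighborFinset_eq_degree]
        exact card_le_card (subset_biUnion_of_mem (G.neighborFinset ·) hv)
    _ < #(A \ N) := hlt

theorem exists_perm_adj_of_forall_isIndepSet_card_le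
    (h : ∀ J : Finset V, G.IsIndepSet (J : Set V) → #J ≤ G.minDegree) :
    ∃ σ : Equiv.Perm V, ∀ v, G.Adj v (σ v) := by
  obtain ⟨f, hf, hfG⟩ := (all_card_le_biUnion_card_iff_exists_injective (G.neighborFinset ·)).1
    fun A => by
      by_contra! hA
      obtain ⟨J, hJ, hlt⟩ := exists_isIndepSet_minDegree_lt_card G hA
      exact (h J hJ).not_gt hlt
  exact ⟨Equiv.ofBijective f hf.bijective_of_finite,
    fun v => (G.mem_neighborFinset _ _).1 (hfG v)⟩

theorem hasFracPerfectMatching_of_forall_adj_perm (σ : Equiv.Perm V)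
    (hσ : ∀ v, G.Adj v (σ v)) : HasFracPerfectMatching G := by
  set g : V → Sym2 V := fun v => s(v, σ v)
  set f : Sym2 V → ℝ := fun e => #{v | g v = e} / 2
  have hg (v : V) : g v ∈ G.edgeFinset := G.mem_edgeFinset.2 (hσ v)
  have hvert (v : V) : ∑ e ∈ G.incidenceFinset v, f e = 1 := by
    have hfiber : ({w | g w ∈ G.incidenceFinset v} : Finset V) = {v, σ.symm v} := by
      ext w
      simp [g, mem_incidenceFinset, incidenceSet, hσ w, Sym2.mem_iff, eq_comm,
        Equiv.eq_symm_apply]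
    have hne : v ≠ σ.symm v := (σ.apply_symm_apply v ▸ hσ (σ.symm v)).ne'
    simp only [f, ← sum_div, ← Nat.cast_sum, sum_card_fiberwise_eq_card_filter, hfiber,
      card_pair hne]
    norm_num
  refine ⟨f, ⟨fun e he => ⟨by positivity, ?_⟩, fun e he => ?_, fun v => (hvert v).le⟩, ?_⟩
  · induction e using Sym2.ind with
    | _ a b =>
      rw [← hvert a]
      exact single_le_sum (fun e _ => by positivity)
        ((G.mem_incidenceFinset _ _).2 ⟨G.mem_edgeFinset.1 he, Sym2.mem_mk_left a b⟩)
  · have : ({v | g v = e} : Finset V) = ∅ := filter_eq_empty_iff.2 fun v _ h => he (h ▸ hg v)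
    simp [f, this]
  · simp only [f, ← sum_div, ← Nat.cast_sum, sum_card_fiberwise_eq_card_filter,
      filter_true_of_mem fun v _ => hg v, card_univ]

end Matching

theorem hasFracPerfectMatching_of_q1_compl_lt_general {V : Type*} [Fintype V] [DecidableEq V]
    (G : SimpleGraph V) [DecidableRel G.Adj]
    (hq : q1 Gᶜ < 2 * (G.minDegree : ℝ)) :
    HasFracPerfectMatching G := by
  obtain ⟨σ, hσ⟩ := exists_perm_adj_of_forall_isIndepSet_card_le G fun J hJ => by
    rcases J.eq_empty_or_nonempty with rfl | hne
    · simp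
    have := two_mul_card_sub_one_le_q1 Gᶜ ((isClique_compl G).2 hJ) hne
    have : (#J : ℝ) < G.minDegree + 1 := by linarith
    exact Nat.lt_succ_iff.1 (by exact_mod_cast this)
  exact hasFracPerfectMatching_of_forall_adj_perm G σ hσ

/-- If `G` is connected with minimum degree `δ` and `q₁(Gᶜ) < 2δ`, then `G` has a
fractional perfect matching. -/
theorem hasFracPerfectMatching_of_q1_compl_lt {V : Type*} [Fintype V] [DecidableEq V]
    (G : SimpleGraph V) [DecidableRel G.Adj] (hconn : G.Connected)
    (hq : q1 Gᶜ < 2 * (G.minDegree : ℝ)) :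
    HasFracPerfectMatching G :=
  hasFracPerfectMatching_of_q1_compl_lt_general G hq
end

section
/- Let G be a connected graph on n vertices with minimum degree δ and complement G^c. If q1(G^c) < 2δ + 1, then G has a fractional perfect matching unless G is isomorphic to the join H1 ∨ H2, where H1 is an independent set of size δ + 1 and H2 is an arbitrary graph on δ vertices. -/
open SimpleGraph Finset

/-! If Hall's condition `|N(A)| ≥ |A|` holds, Hall's theorem gives a permutation `σ` with
`v ~ σ v` for every `v`, and putting weight `1/2` on each edge `vσ(v)` is a fractional perfect
matching. Otherwise some `A` violates it, and `I = A \ N(A)`, `S = N(A) \ A` satisfy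
`N(I) ⊆ S`, `|S| < |I|`. The set `I` is a clique of `Gᶜ` whose vertices have degree at least
`n - 1 - |S|` there, so the Rayleigh quotient of its indicator vector bounds
`q₁(Gᶜ) ≥ n - |S| + |I| - 2`. Together with `q₁(Gᶜ) < 2δ + 1`, `δ ≤ |S| < |I|` and
`|I| + |S| ≤ n` this forces `|I| = δ + 1 = |S| + 1 = n - δ`, which is the exceptional join. -/

open Matrix

open scoped MatrixOrder in
theorem Matrix.IsHermitian.dotProduct_mulVec_le_sSup_spectrum_mul {n : Type*} [Fintype n]
    [DecidableEq n] {A : Matrix n n ℝ} (hA : A.IsHermitian) (x : n → ℝ) :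
    x ⬝ᵥ A *ᵥ x ≤ sSup (spectrum ℝ A) * (x ⬝ᵥ x) := by
  have hle : A ≤ algebraMap ℝ _ (sSup (spectrum ℝ A)) :=
    le_algebraMap_of_spectrum_le (fun _ hμ => le_csSup A.finite_real_spectrum.bddAbove hμ) hA
  have := (Matrix.le_iff.mp hle).dotProduct_mulVec_nonneg x
  rwa [star_trivial, Algebra.algebraMap_eq_smul_one, Matrix.sub_mulVec, Matrix.smul_mulVec,
    Matrix.one_mulVec, dotProduct_sub, dotProduct_smul, smul_eq_mul, sub_nonneg] at this

namespace SimpleGraph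

variable {V : Type*} [Fintype V] (G : SimpleGraph V) [DecidableRel G.Adj]

theorem not_adj_of_neighborFinset_subset {I S : Finset V} (hIS : Disjoint I S)
    (hN : ∀ v ∈ I, G.neighborFinset v ⊆ S) : ∀ u ∈ I, ∀ v ∈ I, ¬G.Adj u v :=
  fun u hu v hv huv => Finset.disjoint_left.mp hIS hv (hN u hu ((G.mem_neighborFinset u v).mpr huv))

variable [DecidableEq V]

theorem hasFracPerfectMatching_of_perm (σ : Equiv.Perm V) (hσ : ∀ v, G.Adj v (σ v)) :
    HasFracPerfectMatching G := by
  set F : Sym2 V → ℝ := fun e => ∑ w, if s(w, σ w) = e then 1 / 2 else 0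
  have hedge (w : V) : s(w, σ w) ∈ G.edgeFinset := G.mem_edgeFinset.mpr (hσ w)
  have hnonneg (e : Sym2 V) : 0 ≤ F e := by positivity
  have hload (v : V) : ∑ e ∈ G.incidenceFinset v, F e ≤ 1 := by
    have hmem (w : V) : s(w, σ w) ∈ G.incidenceFinset v ↔ w = v ∨ σ w = v := by
      rw [mem_incidenceFinset, incidenceSet, Set.mem_ofPred_eq, Sym2.mem_iff]
      simp only [mem_edgeSet, hσ w, true_and, eq_comm]
    calc ∑ e ∈ G.incidenceFinset v, F e
        = ∑ w, if s(w, σ w) ∈ G.incidenceFinset v then (1 / 2 : ℝ) else 0 := by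
          rw [Finset.sum_comm]
          exact Finset.sum_congr rfl fun w _ => Finset.sum_ite_eq _ _ _
      _ ≤ ∑ w, ((if w = v then (1 / 2 : ℝ) else 0) + if σ w = v then 1 / 2 else 0) := by
          refine Finset.sum_le_sum fun w _ => ?_
          simp only [hmem]
          split_ifs <;> simp_all
      _ = 1 := by
          rw [Finset.sum_add_distrib,
            Equiv.sum_comp σ (fun u => if u = v then (1 / 2 : ℝ) else 0)]
          simp only [Finset.sum_ite_eq', Finset.mem_univ, if_true]
          norm_num
  refine ⟨F, ⟨fun e he => ⟨hnonneg e, ?_⟩, fun e he => ?_, hload⟩, ?_⟩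
  · obtain ⟨a, ha⟩ : ∃ a, e ∈ G.incidenceFinset a :=
      ⟨e.out.1,
        (G.mem_incidenceFinset _ _).mpr ⟨G.mem_edgeFinset.mp he, Sym2.out_fst_mem e⟩⟩
    exact (Finset.single_le_sum (fun e _ => hnonneg e) ha).trans (hload a)
  · exact Finset.sum_eq_zero fun w _ => if_neg fun h : s(w, σ w) = e => he (h ▸ hedge w)
  · rw [Finset.sum_comm]
    simp only [Finset.sum_ite_eq, hedge, if_true, Finset.sum_const, Finset.card_univ, nsmul_eq_mul]
    ring

theorem hasFracPerfectMatching_of_forall_card_le_card_biUnion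
    (hHall : ∀ A : Finset V, #A ≤ #(A.biUnion fun v => G.neighborFinset v)) :
    HasFracPerfectMatching G := by
  obtain ⟨f, hf, hadj⟩ := (Finset.all_card_le_biUnion_card_iff_exists_injective _).mp hHall
  exact G.hasFracPerfectMatching_of_perm
    (Equiv.ofBijective f (Finite.injective_iff_bijective.mp hf))
    fun v => (G.mem_neighborFinset v (f v)).mp (hadj v)

theorem exists_card_lt_of_card_biUnion_lt {A : Finset V}
    (hA : #(A.biUnion fun v => G.neighborFinset v) < #A) :
    ∃ I S : Finset V, Disjoint I S ∧ (∀ v ∈ I, G.neighborFinset v ⊆ S) ∧ #S < #I := by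
  set N := A.biUnion fun v => G.neighborFinset v
  refine ⟨A \ N, N \ A, disjoint_sdiff_sdiff, fun v hv w hw => ?_, ?_⟩
  · obtain ⟨hvA, hvN⟩ := Finset.mem_sdiff.mp hv
    refine Finset.mem_sdiff.mpr ⟨Finset.mem_biUnion.mpr ⟨v, hvA, hw⟩, fun hwA => hvN ?_⟩
    exact Finset.mem_biUnion.mpr
      ⟨w, hwA, (G.mem_neighborFinset w v).mpr ((G.mem_neighborFinset v w).mp hw).symm⟩
  · rw [Finset.card_sdiff, Finset.card_sdiff, Finset.inter_comm]
    have := Finset.card_le_card (Finset.inter_subset_left (s₁ := N) (s₂ := A))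
    omega

theorem signlessLap_isHermitian : (signlessLap G).IsHermitian :=
  (Matrix.isHermitian_diagonal _).add G.isSymm_adjMatrix

theorem indicator_dotProduct_signlessLap_mulVec_of_isClique {I : Finset V}
    (hI : G.IsClique (I : Set V)) :
    (fun v => if v ∈ I then (1 : ℝ) else 0) ⬝ᵥ
        signlessLap G *ᵥ (fun v => if v ∈ I then 1 else 0) =
      ∑ v ∈ I, (G.degree v : ℝ) + #I * (#I - 1) := by
  set x : V → ℝ := fun v => if v ∈ I then 1 else 0
  have hx (y : V → ℝ) : x ⬝ᵥ y = ∑ v ∈ I, y v := by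
    simp only [dotProduct, x, ite_mul, one_mul, zero_mul, Finset.sum_ite_mem, Finset.univ_inter]
  have hdeg (v : V) (hv : v ∈ I) :
      (diagonal (fun v => (G.degree v : ℝ)) *ᵥ x) v = G.degree v := by
    simp [mulVec_diagonal, x, hv]
  have hnbr (v : V) (hv : v ∈ I) : (G.adjMatrix ℝ *ᵥ x) v = #I - 1 := by
    have : G.neighborFinset v ∩ I = I.erase v := by
      ext u
      simp only [Finset.mem_inter, mem_neighborFinset, Finset.mem_erase]
      exact ⟨fun h => ⟨(G.ne_of_adj h.1).symm, h.2⟩, fun h => ⟨hI hv h.2 h.1.symm, h.2⟩⟩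
    rw [adjMatrix_mulVec_apply, Finset.sum_ite_mem, this, Finset.sum_const, nsmul_one,
      Finset.card_erase_of_mem hv, Nat.cast_pred (Finset.card_pos.mpr ⟨v, hv⟩)]
  rw [signlessLap, add_mulVec, dotProduct_add, hx, hx, Finset.sum_congr rfl hdeg,
    Finset.sum_congr rfl hnbr, Finset.sum_const, nsmul_eq_mul]

theorem card_sub_card_add_card_le_q1_compl {I S : Finset V} (hIS : Disjoint I S)
    (hN : ∀ v ∈ I, G.neighborFinset v ⊆ S) (hI : I.Nonempty) :
    (Fintype.card V : ℝ) - #S + #I - 2 ≤ q1 Gᶜ := by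
  have hclique : Gᶜ.IsClique (I : Set V) := G.isClique_compl.mpr
    fun u hu v hv _ => G.not_adj_of_neighborFinset_subset hIS hN u hu v hv
  have hdeg (v : V) (hv : v ∈ I) : (Fintype.card V : ℝ) - 1 - #S ≤ Gᶜ.degree v := by
    have hle : G.degree v ≤ #S := Finset.card_le_card (hN v hv)
    have hlt : G.degree v < Fintype.card V := G.degree_lt_card_verts v
    have : Fintype.card V ≤ Gᶜ.degree v + 1 + #S := by rw [degree_compl]; omega
    have : (Fintype.card V : ℝ) ≤ Gᶜ.degree v + 1 + #S := by exact_mod_cast this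
    linarith
  have hx : (fun v => if v ∈ I then (1 : ℝ) else 0) ⬝ᵥ
      (fun v => if v ∈ I then 1 else 0) = #I := by
    simp [dotProduct, Finset.sum_ite_mem]
  have hrayleigh := (signlessLap_isHermitian Gᶜ).dotProduct_mulVec_le_sSup_spectrum_mul
    (fun v => if v ∈ I then 1 else 0)
  rw [Gᶜ.indicator_dotProduct_signlessLap_mulVec_of_isClique hclique, hx] at hrayleigh
  have hsum : (#I : ℝ) * (Fintype.card V - 1 - #S) ≤ ∑ v ∈ I, (Gᶜ.degree v : ℝ) := by
    simpa using Finset.card_nsmul_le_sum I _ _ hdeg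
  have hIpos : (0 : ℝ) < #I := by exact_mod_cast hI.card_pos
  refine le_of_mul_le_mul_right ?_ hIpos
  rw [q1]
  nlinarith

def IsMinDegreeJoin (S : Finset V) : Prop :=
  #S = G.minDegree ∧ #Sᶜ = G.minDegree + 1 ∧ (∀ u ∈ Sᶜ, ∀ v ∈ Sᶜ, ¬G.Adj u v) ∧
    ∀ u ∈ Sᶜ, ∀ v ∈ S, G.Adj u v

theorem isMinDegreeJoin_of_card_add_card_lt {I S : Finset V} (hIS : Disjoint I S)
    (hN : ∀ v ∈ I, G.neighborFinset v ⊆ S) (hSI : #S < #I)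
    (hn : Fintype.card V + #I < 2 * G.minDegree + 3 + #S) : G.IsMinDegreeJoin S := by
  obtain ⟨w, hw⟩ : I.Nonempty := Finset.card_pos.mp (by omega)
  have hδS : G.minDegree ≤ #S := (G.minDegree_le_degree w).trans (Finset.card_le_card (hN w hw))
  have hIScard : #I + #S ≤ Fintype.card V := by
    rw [← Finset.card_union_of_disjoint hIS]
    exact Finset.card_le_univ _
  have hSc : #Sᶜ = Fintype.card V - #S := Finset.card_compl S
  have hI : I = Sᶜ := Finset.eq_of_subset_of_card_le
    (fun u hu => Finset.mem_compl.mpr (Finset.disjoint_left.mp hIS hu)) (by omega)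
  subst hI
  refine ⟨by omega, by omega, G.not_adj_of_neighborFinset_subset hIS hN, fun u hu v hv => ?_⟩
  have hNu : G.neighborFinset u = S := Finset.eq_of_subset_of_card_le (hN u hu)
    (by rw [card_neighborFinset_eq_degree]; linarith [G.minDegree_le_degree u])
  exact (G.mem_neighborFinset u v).mp (hNu ▸ hv)

end SimpleGraph

theorem hasFracPerfectMatching_of_q1_compl_lt'_general {V : Type*} [Fintype V] [DecidableEq V]
    (G : SimpleGraph V) [DecidableRel G.Adj]
    (hq : q1 Gᶜ < 2 * (G.minDegree : ℝ) + 1) :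
    HasFracPerfectMatching G ∨
      ∃ S : Finset V, S.card = G.minDegree ∧ Sᶜ.card = G.minDegree + 1 ∧
        (∀ u ∈ Sᶜ, ∀ v ∈ Sᶜ, ¬ G.Adj u v) ∧
        (∀ u ∈ Sᶜ, ∀ v ∈ S, G.Adj u v) := by
  by_cases hHall : ∀ A : Finset V, #A ≤ #(A.biUnion fun v => G.neighborFinset v)
  · exact Or.inl (G.hasFracPerfectMatching_of_forall_card_le_card_biUnion hHall)
  simp only [not_forall, not_le] at hHall
  obtain ⟨A, hA⟩ := hHall
  obtain ⟨I, S, hIS, hN, hSI⟩ := G.exists_card_lt_of_card_biUnion_lt hA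
  have hbound := G.card_sub_card_add_card_le_q1_compl hIS hN (Finset.card_pos.mp (by omega))
  have hn : Fintype.card V + #I < 2 * G.minDegree + 3 + #S := by
    have : (Fintype.card V : ℝ) + #I < 2 * G.minDegree + 3 + #S := by linarith
    exact_mod_cast this
  exact Or.inr ⟨S, G.isMinDegreeJoin_of_card_add_card_lt hIS hN hSI hn⟩

/-- If `G` is connected with minimum degree `δ` and `q₁(Gᶜ) < 2δ + 1`, then `G` has a
fractional perfect matching, unless `G ≅ H1 ∨ H2` where `H1` is an independent set
of `δ + 1` vertices and `H2` is an arbitrary graph on `δ` vertices. -/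
theorem hasFracPerfectMatching_of_q1_compl_lt' {V : Type*} [Fintype V] [DecidableEq V]
    (G : SimpleGraph V) [DecidableRel G.Adj] (hconn : G.Connected)
    (hq : q1 Gᶜ < 2 * (G.minDegree : ℝ) + 1) :
    HasFracPerfectMatching G ∨
      ∃ S : Finset V, S.card = G.minDegree ∧ Sᶜ.card = G.minDegree + 1 ∧
        (∀ u ∈ Sᶜ, ∀ v ∈ Sᶜ, ¬ G.Adj u v) ∧
        (∀ u ∈ Sᶜ, ∀ v ∈ S, G.Adj u v) :=
  hasFracPerfectMatching_of_q1_compl_lt'_general G hq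
end
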